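/- Let H be a polarizer with 0 ∈ H and u : ℝ^N → [0,∞) measurable. Then the polarization u^H is equimeasurable with u: for every t > 0, the Lebesgue measure of {x : u^H(x) > t} equals the Lebesgue measure of {x : u(x) > t}. Consequently ‖u^H‖_{L^p(ℝ^N)} = ‖u‖_{L^p(ℝ^N)} for every 1 ≤ p < ∞. -/

import Mathlib

open MeasureTheory
open scoped ENNReal

noncomputable def reflectH {N : ℕ} (α : EuclideanSpace ℝ (Fin N)) (β : ℝ)
    (x : EuclideanSpace ℝ (Fin N)) : EuclideanSpace ℝ (Fin N) :=
  x - (2 * ((inner ℝ x α : ℝ) - β)) • α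

noncomputable def polarize {N : ℕ} (α : EuclideanSpace ℝ (Fin N)) (β : ℝ)
    (u : EuclideanSpace ℝ (Fin N) → ℝ) (x : EuclideanSpace ℝ (Fin N)) : ℝ :=
  if (inner ℝ x α : ℝ) ≤ β then max (u x) (u (reflectH α β x))
  else min (u x) (u (reflectH α β x))

/-! The reflection `σ` across the hyperplane `⟪x, α⟫ = β` is an involutive isometry, hence
preserves Lebesgue measure, and on each pair `{x, σ x}` polarization either keeps or swaps the
two values of `u`. So `φ ∘ u^H + φ ∘ u^H ∘ σ = φ ∘ u + φ ∘ u ∘ σ` for every `φ`, and integrating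
gives `∫⁻ φ ∘ u^H = ∫⁻ φ ∘ u`: `u^H` and `u` have the same distribution under Lebesgue measure,
which yields both the level-set and the `L^p` identities. -/

theorem MeasureTheory.MeasurePreserving.lintegral_eq_of_add_comp_eq {X : Type*}
    [MeasurableSpace X] {μ : Measure X} {σ : X → X} (hσ : MeasurePreserving σ μ μ)
    {f g : X → ℝ≥0∞} (hf : Measurable f) (hg : Measurable g)
    (h : ∀ x, f x + f (σ x) = g x + g (σ x)) :
    ∫⁻ x, f x ∂μ = ∫⁻ x, g x ∂μ := by
  have hdouble : ∀ k : X → ℝ≥0∞, Measurable k →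
      2 * ∫⁻ x, k x ∂μ = ∫⁻ x, k x + k (σ x) ∂μ := fun k hk => by
    rw [lintegral_add_left hk, hσ.lintegral_comp hk, two_mul]
  refine (ENNReal.mul_right_inj two_ne_zero ENNReal.ofNat_ne_top).1 ?_
  rw [hdouble f hf, hdouble g hg]
  simp_rw [h]

section Polarization

variable {N : ℕ} {α : EuclideanSpace ℝ (Fin N)} {β : ℝ}

theorem inner_reflectH (hα : ‖α‖ = 1) (x : EuclideanSpace ℝ (Fin N)) :
    inner ℝ (reflectH α β x) α = 2 * β - inner ℝ x α := by
  simp only [reflectH, inner_sub_left, real_inner_smul_left, real_inner_self_eq_norm_sq, hα]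
  ring

theorem reflectH_reflectH (hα : ‖α‖ = 1) (x : EuclideanSpace ℝ (Fin N)) :
    reflectH α β (reflectH α β x) = x := by
  rw [reflectH, inner_reflectH hα, reflectH]
  module

theorem reflectH_eq_self {x : EuclideanSpace ℝ (Fin N)} (hx : inner ℝ x α = β) :
    reflectH α β x = x := by
  simp [reflectH, hx]

theorem reflectH_eq_reflection_add (hα : ‖α‖ = 1) (x : EuclideanSpace ℝ (Fin N)) :
    reflectH α β x = (ℝ ∙ α)ᗮ.reflection x + (2 * β) • α := by
  rw [Submodule.reflection_orthogonal_apply, Submodule.reflection_singleton_apply, hα,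
    reflectH, real_inner_comm]
  simp only [RCLike.ofReal_real_eq_id, id_eq, one_pow, div_one]
  module

theorem continuous_reflectH : Continuous (reflectH α β) := by
  unfold reflectH
  fun_prop

theorem measurePreserving_reflectH (hα : ‖α‖ = 1) :
    MeasurePreserving (reflectH α β) volume volume := by
  have : reflectH α β = (· + (2 * β) • α) ∘ (ℝ ∙ α)ᗮ.reflection :=
    funext (reflectH_eq_reflection_add hα)
  rw [this]
  exact (measurePreserving_add_right volume _).comp (LinearIsometryEquiv.measurePreserving _)

theorem measurable_polarize {u : EuclideanSpace ℝ (Fin N) → ℝ} (hu : Measurable u) :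
    Measurable (polarize α β u) := by
  have hσ := (continuous_reflectH (α := α) (β := β)).measurable
  exact Measurable.ite (measurableSet_le (by fun_prop) measurable_const)
    (hu.max (hu.comp hσ)) (hu.min (hu.comp hσ))

theorem polarize_pair (hα : ‖α‖ = 1) (u : EuclideanSpace ℝ (Fin N) → ℝ)
    (x : EuclideanSpace ℝ (Fin N)) :
    (polarize α β u x = u x ∧ polarize α β u (reflectH α β x) = u (reflectH α β x)) ∨
      (polarize α β u x = u (reflectH α β x) ∧ polarize α β u (reflectH α β x) = u x) := by
  have hin := inner_reflectH (β := β) hα x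
  have hback := reflectH_reflectH (β := β) hα x
  by_cases hx : inner ℝ x α ≤ β <;> by_cases hσx : inner ℝ (reflectH α β x) α ≤ β
  · have hfix : reflectH α β x = x := reflectH_eq_self (by linarith)
    simp [polarize, hfix, hx]
  · simp only [polarize, hx, hσx, hback, if_true, if_false]
    rcases le_total (u x) (u (reflectH α β x)) with h | h <;> simp [h]
  · simp only [polarize, hx, hσx, hback, if_true, if_false]
    rcases le_total (u x) (u (reflectH α β x)) with h | h <;> simp [h]
  · exact absurd hin (by linarith)

theorem lintegral_comp_polarize (hα : ‖α‖ = 1) {u : EuclideanSpace ℝ (Fin N) → ℝ}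
    (hu : Measurable u) {φ : ℝ → ℝ≥0∞} (hφ : Measurable φ) :
    ∫⁻ x, φ (polarize α β u x) = ∫⁻ x, φ (u x) := by
  refine (measurePreserving_reflectH (β := β) hα).lintegral_eq_of_add_comp_eq
    (hφ.comp (measurable_polarize hu)) (hφ.comp hu) fun x => ?_
  rcases polarize_pair hα u x with ⟨h₁, h₂⟩ | ⟨h₁, h₂⟩
  · rw [h₁, h₂]
  · rw [h₁, h₂, add_comm]

theorem identDistrib_polarize (hα : ‖α‖ = 1) {u : EuclideanSpace ℝ (Fin N) → ℝ}
    (hu : Measurable u) : ProbabilityTheory.IdentDistrib (polarize α β u) u where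
  aemeasurable_fst := (measurable_polarize hu).aemeasurable
  aemeasurable_snd := hu.aemeasurable
  map_eq := Measure.ext_of_lintegral _ fun φ hφ => by
    rw [lintegral_map hφ (measurable_polarize hu), lintegral_map hφ hu,
      lintegral_comp_polarize hα hu hφ]

end Polarization

theorem stmt6_general {N : ℕ} (α : EuclideanSpace ℝ (Fin N)) (β : ℝ)
    (hα : ‖α‖ = 1)
    (u : EuclideanSpace ℝ (Fin N) → ℝ) (hmu : Measurable u) :
    (∀ t : ℝ, 0 < t →
      volume {x | t < polarize α β u x} = volume {x | t < u x}) ∧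
    (∀ p : ℝ≥0∞, 1 ≤ p → p ≠ ⊤ →
      eLpNorm (polarize α β u) p volume = eLpNorm u p volume) := by
  have h := identDistrib_polarize (β := β) hα hmu
  exact ⟨fun t _ => h.measure_mem_eq measurableSet_Ioi, fun p _ _ => h.eLpNorm_eq p⟩

/-- polarization is equimeasurable with the original nonnegative
measurable function, and preserves all `L^p` norms, `1 ≤ p < ∞`. -/
theorem stmt6 {N : ℕ} (α : EuclideanSpace ℝ (Fin N)) (β : ℝ)
    (hα : ‖α‖ = 1) (hβ : 0 ≤ β)
    (u : EuclideanSpace ℝ (Fin N) → ℝ) (hmu : Measurable u) (hu : ∀ x, 0 ≤ u x) :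
    (∀ t : ℝ, 0 < t →
      volume {x | t < polarize α β u x} = volume {x | t < u x}) ∧
    (∀ p : ℝ≥0∞, 1 ≤ p → p ≠ ⊤ →
      eLpNorm (polarize α β u) p volume = eLpNorm u p volume) :=
  stmt6_general α β hα u hmu
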